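/- Let M = {M_1, M_2} be a binary MMDP, M^p = {M_1^p, M_2^p} its preprocessed MMDP, and M^I any informative MDP of M. Let H_D = {h ∈ H : inf(h) ∩ ISA^p ≠ ∅}, where H is the space of infinite histories over the common state and action spaces of M^p. Then for any policy π: P_I^π(H_D) = 1 if and only if P_1^π(H_D) = 1, and P_I^π(H_D) = 1 if and only if P_2^π(H_D) = 1, where P_I^π, P_1^π and P_2^π are the probability measures on infinite histories induced from s_init by the policy π and the kernels δ^I, δ_1^p and δ_2^p respectively. -/

import Mathlib

open Finset Filter

/-- A history of length `t` of an MDP with states `S` and actions `A`: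
a sequence of `t+1` states and `t` actions `(s₀, a₀, s₁, …, a_{t-1}, s_t)`. -/
abbrev Hist (S A : Type) (t : ℕ) : Type := (Fin (t + 1) → S) × (Fin t → A)

/-- The last state of a history. -/
def lastState {S A : Type} {t : ℕ} (h : Hist S A t) : S := h.1 (Fin.last t)

/-- The length-`τ` prefix of a history of length `t` (for `τ < t`). -/
def prefixH {S A : Type} {t : ℕ} (h : Hist S A t) (τ : Fin t) : Hist S A τ.val :=
  (fun i => h.1 (Fin.castLE (Nat.succ_le_succ τ.isLt.le) i),
   fun i => h.2 (Fin.castLE τ.isLt.le i))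

/-- A history-dependent randomized policy over the available-action map `act`:
for every time `t` and history `h` of length `t` it gives a probability
distribution over the actions available at the last state of `h`. -/
structure Policy (S A : Type) [Fintype S] [Fintype A] (act : S → Finset A) where
  p : (t : ℕ) → Hist S A t → A → ℝ
  nonneg : ∀ (t : ℕ) (h : Hist S A t) (a : A), 0 ≤ p t h a
  sum_one : ∀ (t : ℕ) (h : Hist S A t), ∑ a ∈ act (lastState h), p t h a = 1
  zero_off : ∀ (t : ℕ) (h : Hist S A t), ∀ a ∉ act (lastState h), p t h a = 0

/-- The probability `P^π(h)` of a history `h` of length `t` under the transition kernel `δ`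
    and (the underlying map `πf` of) a policy, starting from the initial state `init`. -/
noncomputable def histProb {S A : Type} [Fintype S] [Fintype A] [DecidableEq S]
    (init : S) (δ : S → A → S → ℝ)
    (πf : (t : ℕ) → Hist S A t → A → ℝ) (t : ℕ) (h : Hist S A t) : ℝ :=
  (if h.1 0 = init then (1 : ℝ) else 0) *
    ∏ τ : Fin t,
      πf τ.val (prefixH h τ) (h.2 τ) * δ (h.1 τ.castSucc) (h.2 τ) (h.1 τ.succ)

/-- The Bhattacharyya coefficient at step `t` between the history distributions induced by
the kernels `δ1` and `δ2` under the policy map `πf`: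
`B(t,π) = Σ_{h_t} √(P₁^π(h_t)·P₂^π(h_t))`. -/
noncomputable def BC {S A : Type} [Fintype S] [Fintype A] [DecidableEq S]
    (init : S) (δ1 δ2 : S → A → S → ℝ)
    (πf : (t : ℕ) → Hist S A t → A → ℝ) (t : ℕ) : ℝ :=
  ∑ h : Hist S A t,
    Real.sqrt (histProb init δ1 πf t h * histProb init δ2 πf t h)

/-- A binary MMDP: two MDPs sharing the state space `S`, available actions `act`,
and initial state `init`, with transition kernels `δ 0` and `δ 1`. -/
structure BinMMDP (S A : Type) [Fintype S] [Fintype A] where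
  act : S → Finset A
  act_nonempty : ∀ s, (act s).Nonempty
  init : S
  δ : Fin 2 → S → A → S → ℝ
  δ_nonneg : ∀ i s a s', 0 ≤ δ i s a s'
  δ_sum : ∀ i s, ∀ a ∈ act s, ∑ s', δ i s a s' = 1

open MeasureTheory in
/-- The space of infinite histories (trajectories) `(s₀, a₀, s₁, a₁, …)`, recorded as the
sequence of state-action pairs, equipped with the product σ-algebra of the discrete
σ-algebras (so that the σ-algebra is generated by the cylinder sets). -/
def Traj (S A : Type) : Type := ℕ → S × A

instance (S A : Type) : MeasurableSpace (Traj S A) :=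
  @MeasurableSpace.pi ℕ (fun _ => S × A) (fun _ => ⊤)

/-- The cylinder set of infinite histories extending the finite history `h`. -/
def Cyl {S A : Type} {t : ℕ} (h : Hist S A t) : Set (Traj S A) :=
  {ω | (∀ i : Fin (t + 1), (ω i.val).1 = h.1 i) ∧ ∀ i : Fin t, (ω i.val).2 = h.2 i}

/-- `inf(ω)`: the set of state-action pairs occurring infinitely often in the infinite
history `ω`. -/
def InfOften {S A : Type} (ω : Traj S A) : Set (S × A) :=
  {p | {n : ℕ | ω n = p}.Infinite}

/-- `P` is the probability measure on infinite histories induced from the initial state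
`init` by the transition kernel `δ` and the policy map `πf` (the Ionescu–Tulcea measure):
it is a probability measure whose value on every cylinder set is the probability of the
corresponding finite history. -/
def IsInduced {S A : Type} [Fintype S] [Fintype A] [DecidableEq S]
    (init : S) (δ : S → A → S → ℝ) (πf : (t : ℕ) → Hist S A t → A → ℝ)
    (P : MeasureTheory.Measure (Traj S A)) : Prop :=
  MeasureTheory.IsProbabilityMeasure P ∧
    ∀ (t : ℕ) (h : Hist S A t),
      P (Cyl h) = ENNReal.ofReal (histProb init δ πf t h)

section Preprocessing

open scoped Classical

variable {S A : Type}

/-- A state-action pair `(s,a)` is revealing for the pair of kernels `δ 0, δ 1` if the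
supports of `δ 0 (·|s,a)` and `δ 1 (·|s,a)` are disjoint. -/
def RevealingPair (δ : Fin 2 → S → A → S → ℝ) (s : S) (a : A) : Prop :=
  ∀ s' : S, ¬(0 < δ 0 s a s' ∧ 0 < δ 1 s a s')

/-- A state-action pair `(s,a)` is informative for the pair of kernels `δ 0, δ 1` if
`δ 0 (·|s,a) ≠ δ 1 (·|s,a)` and their supports intersect. -/
def InformativePair (δ : Fin 2 → S → A → S → ℝ) (s : S) (a : A) : Prop :=
  δ 0 s a ≠ δ 1 s a ∧ ∃ s' : S, 0 < δ 0 s a s' ∧ 0 < δ 1 s a s'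

/-- A state is revealing if some available action at it forms a revealing pair. -/
def RevealingState (act : S → Finset A) (δ : Fin 2 → S → A → S → ℝ) (s : S) : Prop :=
  ∃ a ∈ act s, RevealingPair δ s a

variable [Fintype S] [Fintype A] [DecidableEq S] [DecidableEq A]

/-- Available actions of the preprocessed MMDP.  The state space is `S ⊕ Fin 2`, where
`Sum.inr i` is the terminal state `⊥_{i+1}`; at a revealing state only the chosen revealing
action `ra s` remains, at the terminal state `⊥_j` only the fresh action `a^{⊥_j}`
(encoded `Sum.inr j`) is available, and all other actions are kept. -/
noncomputable def actp (act : S → Finset A) (δ : Fin 2 → S → A → S → ℝ) (ra : S → A) :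
    S ⊕ Fin 2 → Finset (A ⊕ Fin 2)
  | Sum.inl s =>
      if RevealingState act δ s then {Sum.inl (ra s)} else (act s).image Sum.inl
  | Sum.inr j => {Sum.inr j}

/-- The transition kernel `δ_i^p` of the `i`-th preprocessed MDP `M_i^p`:
the terminal states `⊥_j = Sum.inr j` are absorbing; a revealing pair `(s,a)` moves to
`⊥_i` with probability one; an informative pair `(s,a)` keeps the probabilities of
successors in the common support and redirects the remaining mass of `δ i (·|s,a)` to
`⊥_i`; all other transitions are unchanged. -/
noncomputable def δp (δ : Fin 2 → S → A → S → ℝ) (i : Fin 2) :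
    S ⊕ Fin 2 → A ⊕ Fin 2 → S ⊕ Fin 2 → ℝ
  | Sum.inr j, _, s' => if s' = Sum.inr j then 1 else 0
  | Sum.inl s, Sum.inl a, Sum.inl s' =>
      if RevealingPair δ s a then 0
      else if InformativePair δ s a then
        (if 0 < δ (1 - i) s a s' then δ i s a s' else 0)
      else δ i s a s'
  | Sum.inl s, Sum.inl a, Sum.inr j =>
      if RevealingPair δ s a then (if j = i then 1 else 0)
      else if InformativePair δ s a then
        (if j = i then
          ∑ s' ∈ Finset.univ.filter (fun s' : S => ¬ 0 < δ (1 - i) s a s'), δ i s a s'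
        else 0)
      else 0
  | Sum.inl _, Sum.inr _, _ => 0

/-- `ISA^p`: the set of state-action pairs of the preprocessed MMDP that are informative
for the preprocessed MMDP, together with the two terminal pairs `(⊥_j, a^{⊥_j})`. -/
def ISAp (act : S → Finset A) (δ : Fin 2 → S → A → S → ℝ) (ra : S → A) :
    Set ((S ⊕ Fin 2) × (A ⊕ Fin 2)) :=
  {x | x.2 ∈ actp act δ ra x.1 ∧ InformativePair (fun i => δp δ i) x.1 x.2}
    ∪ {x | ∃ j : Fin 2, x = (Sum.inr j, Sum.inr j)}

end Preprocessing

/-! Almost surely every step of a trajectory takes an available action and makes a transition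
of positive probability. Such a trajectory visits `ISAp` only finitely often iff from some
time `N` on it only uses pairs at non-terminal states at which the two preprocessed kernels
agree: an available pair outside `ISAp` at which they differ has disjoint supports, so it can
only lead to a terminal state `⊥ⱼ`, whose unique pair lies in `ISAp`.

All kernels `γ δ₁ᵖ + (1 - γ) δ₂ᵖ` with `γ ∈ [0, 1]` (among them `δ₁ᵖ` and `δ₂ᵖ`) have the same
support between non-terminal states, hence dominate each other there up to a constant factor
`K`, and they coincide on the pairs above. So the probabilities of a history that uses only such
pairs from time `N` on differ by at most the factor `K ^ N`, and the tail events are null for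
one of these kernels iff they are null for all of them. -/

open MeasureTheory Topology

section Trajectories

variable {X Y : Type}

namespace Traj

def trunc (ω : Traj X Y) (t : ℕ) : Hist X Y t :=
  (fun i => (ω i).1, fun i => (ω i).2)

theorem mem_cyl_iff {t : ℕ} {h : Hist X Y t} {ω : Traj X Y} : ω ∈ Cyl h ↔ ω.trunc t = h :=
  ⟨fun hω => Prod.ext (funext hω.1) (funext hω.2), fun hω => hω ▸ ⟨fun _ => rfl, fun _ => rfl⟩⟩

theorem measurableSet_setOf_apply_mem (n : ℕ) (s : Set (X × Y)) :
    MeasurableSet {ω : Traj X Y | ω n ∈ s} :=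
  @measurable_pi_apply ℕ (fun _ => X × Y) (fun _ => ⊤) n s trivial

theorem measurableSet_cyl {t : ℕ} (h : Hist X Y t) : MeasurableSet (Cyl h) := by
  simp only [Cyl, Set.ofPred_and, Set.ofPred_forall]
  exact (MeasurableSet.iInter fun i : Fin (t + 1) =>
      measurableSet_setOf_apply_mem i {p | p.1 = h.1 i}).inter
    (MeasurableSet.iInter fun i : Fin t => measurableSet_setOf_apply_mem i {p | p.2 = h.2 i})

variable [Fintype X] [Fintype Y]

theorem setOf_trunc_eq_biUnion_cyl (t : ℕ) (Q : Hist X Y t → Prop) [DecidablePred Q] :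
    {ω : Traj X Y | Q (ω.trunc t)} = ⋃ h ∈ Finset.univ.filter Q, Cyl h := by
  ext ω
  simp [mem_cyl_iff]

theorem measurableSet_setOf_trunc (t : ℕ) (Q : Hist X Y t → Prop) :
    MeasurableSet {ω : Traj X Y | Q (ω.trunc t)} := by
  classical
  rw [setOf_trunc_eq_biUnion_cyl]
  exact Finset.measurableSet_biUnion _ fun h _ => measurableSet_cyl h

end Traj

variable [Fintype X] [Fintype Y] [DecidableEq X]

theorem IsInduced.measure_setOf_trunc {x₀ : X} {e : X → Y → X → ℝ}
    {πf : (t : ℕ) → Hist X Y t → Y → ℝ} {P : Measure (Traj X Y)} (hP : IsInduced x₀ e πf P)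
    (t : ℕ) (Q : Hist X Y t → Prop) [DecidablePred Q] :
    P {ω | Q (ω.trunc t)} = ∑ h ∈ Finset.univ.filter Q, ENNReal.ofReal (histProb x₀ e πf t h) := by
  rw [Traj.setOf_trunc_eq_biUnion_cyl, measure_biUnion_finset
    (fun h _ h' _ hne => Set.disjoint_left.2 fun ω hω hω' =>
      hne (Traj.mem_cyl_iff.1 hω ▸ Traj.mem_cyl_iff.1 hω'))
    fun h _ => Traj.measurableSet_cyl h]
  exact Finset.sum_congr rfl fun h _ => hP.2 t h

theorem histProb_nonneg {x₀ : X} {e : X → Y → X → ℝ} {πf : (t : ℕ) → Hist X Y t → Y → ℝ}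
    (he : ∀ x a y, 0 ≤ e x a y) (hπ : ∀ t h a, 0 ≤ πf t h a) (t : ℕ) (h : Hist X Y t) :
    0 ≤ histProb x₀ e πf t h :=
  mul_nonneg (by split_ifs <;> norm_num)
    (Finset.prod_nonneg fun _ _ => mul_nonneg (hπ _ _ _) (he _ _ _))

theorem factor_ne_zero_of_histProb_ne_zero {x₀ : X} {e : X → Y → X → ℝ}
    {πf : (t : ℕ) → Hist X Y t → Y → ℝ} {t : ℕ} {h : Hist X Y t}
    (hh : histProb x₀ e πf t h ≠ 0) (τ : Fin t) :
    πf τ (prefixH h τ) (h.2 τ) ≠ 0 ∧ e (h.1 τ.castSucc) (h.2 τ) (h.1 τ.succ) ≠ 0 :=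
  mul_ne_zero_iff.1 (Finset.prod_ne_zero_iff.1 (right_ne_zero_of_mul hh) τ (Finset.mem_univ τ))

theorem IsInduced.ae_histProb_trunc_ne_zero {x₀ : X} {e : X → Y → X → ℝ}
    {πf : (t : ℕ) → Hist X Y t → Y → ℝ} {P : Measure (Traj X Y)} (hP : IsInduced x₀ e πf P) :
    ∀ᵐ ω ∂P, ∀ t, histProb x₀ e πf t (ω.trunc t) ≠ 0 := by
  classical
  refine ae_all_iff.2 fun t => measure_eq_zero_iff_ae_notMem.1 ?_
  change P {ω | histProb x₀ e πf t (ω.trunc t) = 0} = 0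
  rw [hP.measure_setOf_trunc t (fun h => histProb x₀ e πf t h = 0)]
  exact Finset.sum_eq_zero fun h hh => by rw [(Finset.mem_filter.1 hh).2, ENNReal.ofReal_zero]

theorem IsInduced.ae_mem_act_and_kernel_ne_zero {act : X → Finset Y} {π : Policy X Y act} {x₀ : X}
    {e : X → Y → X → ℝ} {P : Measure (Traj X Y)} (hP : IsInduced x₀ e π.p P) :
    ∀ᵐ ω ∂P, ∀ n, (ω n).2 ∈ act (ω n).1 ∧ e (ω n).1 (ω n).2 (ω (n + 1)).1 ≠ 0 := by
  filter_upwards [hP.ae_histProb_trunc_ne_zero] with ω hω n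
  obtain ⟨hπ, he⟩ := factor_ne_zero_of_histProb_ne_zero (hω (n + 1)) (Fin.last n)
  exact ⟨not_imp_comm.1 (π.zero_off n (ω.trunc n) (ω n).2) hπ, he⟩

end Trajectories

section InfinitelyOften

variable {X Y : Type}

theorem infOften_inter_nonempty_iff [Finite (X × Y)] {ω : Traj X Y} {T : Set (X × Y)} :
    (InfOften ω ∩ T).Nonempty ↔ ∃ᶠ n in atTop, ω n ∈ T := by
  have : (∃ᶠ n in atTop, ω n ∈ T) ↔ ∃ᶠ n in atTop, ∃ p, ω n = p ∧ p ∈ T := by simp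
  rw [this, frequently_exists]
  simp [InfOften, ← Nat.frequently_atTop_iff_infinite, Set.Nonempty, frequently_and_distrib_right]

theorem Traj.measurableSet_setOf_frequently_mem (T : Set (X × Y)) :
    MeasurableSet {ω : Traj X Y | ∃ᶠ n in atTop, ω n ∈ T} := by
  have : {ω : Traj X Y | ∃ᶠ n in atTop, ω n ∈ T} = limsup (fun n => {ω | ω n ∈ T}) atTop := by
    ext ω; simp [mem_limsup_iff_frequently_mem]
  rw [this]
  exact MeasurableSet.measurableSet_limsup fun n => Traj.measurableSet_setOf_apply_mem n T

def Traj.tailIn (G : Set (X × Y)) (N : ℕ) : Set (Traj X Y) := {ω | ∀ n, N ≤ n → ω n ∈ G}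

variable [Fintype X] [Fintype Y] [DecidableEq X]

theorem IsInduced.measure_infOften_inter_nonempty_eq_one_iff {act : X → Finset Y}
    {π : Policy X Y act} {x₀ : X} {e : X → Y → X → ℝ} {P : Measure (Traj X Y)}
    (hP : IsInduced x₀ e π.p P) {T G : Set (X × Y)} (hGT : Disjoint G T)
    (hstep : ∀ x a y b, a ∈ act x → e x a y ≠ 0 → b ∈ act y → (x, a) ∉ T → (y, b) ∉ T →
      (x, a) ∈ G) :
    P {ω | (InfOften ω ∩ T).Nonempty} = 1 ↔ ∀ N, P (Traj.tailIn G N) = 0 := by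
  have := hP.1
  simp only [infOften_inter_nonempty_iff]
  rw [← prob_compl_eq_zero_iff (Traj.measurableSet_setOf_frequently_mem T)]
  constructor
  · intro h N
    refine measure_mono_null ?_ h
    intro ω hω hT
    obtain ⟨n, hn, hnT⟩ := frequently_atTop.1 hT N
    exact hGT.notMem_of_mem_left (hω n hn) hnT
  · intro h
    refine measure_mono_null_ae ?_ (measure_iUnion_null h)
    filter_upwards [hP.ae_mem_act_and_kernel_ne_zero] with ω hω hT
    obtain ⟨N, hN⟩ := eventually_atTop.1 (not_frequently.1 hT)
    exact Set.mem_iUnion.2 ⟨N, fun n hn => hstep _ _ _ _ (hω n).1 (hω n).2 (hω (n + 1)).1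
      (hN n hn) (hN (n + 1) (by omega))⟩

end InfinitelyOften

section Comparison

theorem exists_le_mul_of_pos_imp_pos {ι : Type*} [Finite ι] {u v : ι → ℝ} (hv : ∀ i, 0 ≤ v i)
    (huv : ∀ i, 0 < u i → 0 < v i) : ∃ K, 1 ≤ K ∧ ∀ i, u i ≤ K * v i := by
  obtain ⟨K, hK⟩ := Finite.exists_le fun i => u i / v i
  refine ⟨max K 1, le_max_right _ _, fun i => ?_⟩
  rcases le_or_gt (u i) 0 with hu | hu
  · exact hu.trans (mul_nonneg (zero_le_one.trans (le_max_right _ _)) (hv i))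
  · calc u i = u i / v i * v i := (div_mul_cancel₀ _ (huv i hu).ne').symm
      _ ≤ max K 1 * v i := mul_le_mul_of_nonneg_right ((hK i).trans (le_max_left _ _)) (hv i)

theorem Fin.prod_le_pow_mul_prod {M N : ℕ} {K : ℝ} (hK : 1 ≤ K) {u v : Fin M → ℝ}
    (hu : ∀ τ, 0 ≤ u τ) (hv : ∀ τ, 0 ≤ v τ) (hlt : ∀ τ : Fin M, ↑τ < N → u τ ≤ K * v τ)
    (hge : ∀ τ : Fin M, N ≤ ↑τ → u τ ≤ v τ) :
    ∏ τ, u τ ≤ K ^ N * ∏ τ, v τ := by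
  classical
  calc ∏ τ, u τ ≤ ∏ τ : Fin M, K ^ (if ↑τ < N then 1 else 0) * v τ := by
        refine Finset.prod_le_prod (fun τ _ => hu τ) fun τ _ => ?_
        split_ifs with hτ
        · simpa using hlt τ hτ
        · simpa using hge τ (not_lt.1 hτ)
    _ = K ^ #{τ : Fin M | ↑τ < N} * ∏ τ, v τ := by
        rw [Finset.prod_mul_distrib, Finset.prod_pow_eq_pow_sum, Finset.sum_boole, Nat.cast_id]
    _ ≤ K ^ N * ∏ τ, v τ := by
        gcongr
        · exact Finset.prod_nonneg fun τ _ => hv τ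
        · rw [Fin.card_filter_val_lt]; exact min_le_right _ _

variable {X Y : Type} [Fintype X] [Fintype Y] [DecidableEq X]

theorem histProb_le_pow_mul_histProb {x₀ : X} {e f : X → Y → X → ℝ}
    {πf : (t : ℕ) → Hist X Y t → Y → ℝ}
    (he : ∀ x a y, 0 ≤ e x a y) (hf : ∀ x a y, 0 ≤ f x a y) (hπ : ∀ t h a, 0 ≤ πf t h a)
    {B : Set X} (hB : ∀ x a y, x ∈ B → e x a y ≠ 0 → y ∈ B)
    {G : Set (X × Y)} (hG : ∀ p ∈ G, p.1 ∉ B ∧ e p.1 p.2 = f p.1 p.2)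
    {K : ℝ} (hK : 1 ≤ K) (hef : ∀ x a y, x ∉ B → y ∉ B → e x a y ≤ K * f x a y)
    {N M : ℕ} (hNM : N < M) {h : Hist X Y M}
    (hhG : ∀ τ : Fin M, N ≤ ↑τ → (h.1 τ.castSucc, h.2 τ) ∈ G) :
    histProb x₀ e πf M h ≤ K ^ N * histProb x₀ f πf M h := by
  by_cases h0 : histProb x₀ e πf M h = 0
  · rw [h0]
    exact mul_nonneg (by positivity) (histProb_nonneg hf hπ M h)
  have hstep := factor_ne_zero_of_histProb_ne_zero h0
  -- `B` is absorbing and the state at time `N` is outside `B`, hence so are all earlier ones.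
  have hmono : Monotone fun i => h.1 i ∈ B :=
    Fin.monotone_iff_le_succ.2 fun τ hτ => hB _ _ _ hτ (hstep τ).2
  have hNB : ∀ i : Fin (M + 1), ↑i ≤ N → h.1 i ∉ B := fun i hi hiB =>
    (hG _ (hhG ⟨N, hNM⟩ le_rfl)).1 (hmono (show i ≤ ⟨N, by omega⟩ from hi) hiB)
  unfold histProb
  rw [mul_left_comm]
  refine mul_le_mul_of_nonneg_left (Fin.prod_le_pow_mul_prod hK
    (fun τ => mul_nonneg (hπ _ _ _) (he _ _ _)) (fun τ => mul_nonneg (hπ _ _ _) (hf _ _ _))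
    (fun τ hτ => ?_) (fun τ hτ => ?_)) (by split_ifs <;> norm_num)
  · rw [mul_left_comm]
    exact mul_le_mul_of_nonneg_left (hef _ _ _ (hNB _ (by simp; omega)) (hNB _ (by simp; omega)))
      (hπ _ _ _)
  · rw [(hG _ (hhG τ hτ)).2]

theorem IsInduced.measure_tailIn_le {x₀ : X} {e f : X → Y → X → ℝ}
    {πf : (t : ℕ) → Hist X Y t → Y → ℝ} {Pe Pf : Measure (Traj X Y)}
    (hPe : IsInduced x₀ e πf Pe) (hPf : IsInduced x₀ f πf Pf)
    (he : ∀ x a y, 0 ≤ e x a y) (hf : ∀ x a y, 0 ≤ f x a y) (hπ : ∀ t h a, 0 ≤ πf t h a)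
    {B : Set X} (hB : ∀ x a y, x ∈ B → e x a y ≠ 0 → y ∈ B)
    {G : Set (X × Y)} (hG : ∀ p ∈ G, p.1 ∉ B ∧ e p.1 p.2 = f p.1 p.2)
    {K : ℝ} (hK : 1 ≤ K) (hef : ∀ x a y, x ∉ B → y ∉ B → e x a y ≤ K * f x a y) (N : ℕ) :
    Pe (Traj.tailIn G N) ≤ ENNReal.ofReal (K ^ N) * Pf (Traj.tailIn G N) := by
  classical
  have := hPf.1
  let Q (M : ℕ) (h : Hist X Y M) : Prop := ∀ τ : Fin M, N ≤ ↑τ → (h.1 τ.castSucc, h.2 τ) ∈ G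
  let W (M : ℕ) : Set (Traj X Y) := {ω | Q M (ω.trunc M)}
  have hW : Antitone W := fun M M' hMM' ω hω τ hτ => hω (Fin.castLE hMM' τ) hτ
  have htail : Traj.tailIn G N = ⋂ M, W M := by
    ext ω
    simp only [Traj.tailIn, Set.mem_ofPred_eq, Set.mem_iInter]
    exact ⟨fun hω M τ hτ => hω τ hτ, fun hω n hn => hω (n + 1) ⟨n, by omega⟩ hn⟩
  have hlim : Tendsto (fun M => Pf (W M)) atTop (𝓝 (Pf (Traj.tailIn G N))) := by
    rw [htail]
    exact tendsto_measure_iInter_atTop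
      (fun M => (Traj.measurableSet_setOf_trunc M (Q M)).nullMeasurableSet) hW
      ⟨0, measure_ne_top _ _⟩
  refine ge_of_tendsto (ENNReal.Tendsto.const_mul hlim (Or.inr ENNReal.ofReal_ne_top)) ?_
  filter_upwards [eventually_gt_atTop N] with M hM
  calc Pe (Traj.tailIn G N) ≤ Pe (W M) := measure_mono (htail ▸ Set.iInter_subset W M)
    _ = ∑ h ∈ Finset.univ.filter (Q M), ENNReal.ofReal (histProb x₀ e πf M h) :=
        hPe.measure_setOf_trunc M (Q M)
    _ ≤ ∑ h ∈ Finset.univ.filter (Q M),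
          ENNReal.ofReal (K ^ N) * ENNReal.ofReal (histProb x₀ f πf M h) := by
        refine Finset.sum_le_sum fun h hh => ?_
        rw [← ENNReal.ofReal_mul (by positivity)]
        exact ENNReal.ofReal_le_ofReal (histProb_le_pow_mul_histProb he hf hπ hB hG hK hef hM
          (Finset.mem_filter.1 hh).2)
    _ = ENNReal.ofReal (K ^ N) * Pf (W M) := by
        rw [← Finset.mul_sum, hPf.measure_setOf_trunc M (Q M)]

end Comparison

section Preprocessed

variable {S A : Type} {δ : Fin 2 → S → A → S → ℝ}

theorem eq_of_not_revealingPair_of_not_informativePair {s : S} {a : A}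
    (hrev : ¬RevealingPair δ s a) (hinf : ¬InformativePair δ s a) : δ 0 s a = δ 1 s a := by
  by_contra hne
  exact hinf ⟨hne, not_forall_not.1 hrev⟩

variable [Fintype S] [DecidableEq S]

theorem δp_nonneg (hδ : ∀ i s a s', 0 ≤ δ i s a s') (i : Fin 2) :
    ∀ x a y, 0 ≤ δp δ i x a y := by
  rintro (s | j) (a | k) (s' | j') <;> simp only [δp] <;> (try split_ifs) <;>
    first | positivity | exact hδ .. | exact Finset.sum_nonneg fun _ _ => hδ ..

theorem eq_of_δp_inr_ne_zero {i j : Fin 2} {a : A ⊕ Fin 2} {y : S ⊕ Fin 2}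
    (h : δp δ i (Sum.inr j) a y ≠ 0) : y = Sum.inr j := by
  cases a <;> simpa [δp] using h

theorem δp_inl_pos_iff (s s' : S) (a : A ⊕ Fin 2) :
    0 < δp δ 0 (Sum.inl s) a (Sum.inl s') ↔ 0 < δp δ 1 (Sum.inl s) a (Sum.inl s') := by
  rcases a with a | k
  · simp only [δp]
    by_cases hrev : RevealingPair δ s a
    · simp only [if_pos hrev]
    by_cases hinf : InformativePair δ s a
    · simp only [if_neg hrev, if_pos hinf]
      split_ifs <;> simp_all
    · simp only [if_neg hrev, if_neg hinf, eq_of_not_revealingPair_of_not_informativePair hrev hinf]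
  · rfl

theorem convex_comb_pos_iff {γ u v : ℝ} (hγ : γ ∈ Set.Icc (0 : ℝ) 1) (hu : 0 ≤ u) (hv : 0 ≤ v)
    (huv : 0 < u ↔ 0 < v) : 0 < γ * u + (1 - γ) * v ↔ 0 < u := by
  rcases hu.eq_or_lt with rfl | hu
  · simp [le_antisymm (not_lt.1 (huv.not.1 (lt_irrefl 0))) hv]
  · have hv := huv.1 hu
    simp only [hu, iff_true]
    rcases hγ.1.eq_or_lt with rfl | hγ0
    · simpa using hv
    · exact add_pos_of_pos_of_nonneg (mul_pos hγ0 hu) (mul_nonneg (sub_nonneg.2 hγ.2) hv.le)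

noncomputable def informativeKernel (δ : Fin 2 → S → A → S → ℝ) (γ : ℝ) :
    S ⊕ Fin 2 → A ⊕ Fin 2 → S ⊕ Fin 2 → ℝ :=
  fun x a y => γ * δp δ 0 x a y + (1 - γ) * δp δ 1 x a y

theorem informativeKernel_one : informativeKernel δ 1 = δp δ 0 := by
  funext x a y
  simp [informativeKernel]

theorem informativeKernel_zero : informativeKernel δ 0 = δp δ 1 := by
  funext x a y
  simp [informativeKernel]

theorem informativeKernel_nonneg (hδ : ∀ i s a s', 0 ≤ δ i s a s') {γ : ℝ}
    (hγ : γ ∈ Set.Icc (0 : ℝ) 1) (x : S ⊕ Fin 2) (a : A ⊕ Fin 2) (y : S ⊕ Fin 2) :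
    0 ≤ informativeKernel δ γ x a y :=
  add_nonneg (mul_nonneg hγ.1 (δp_nonneg hδ 0 x a y))
    (mul_nonneg (sub_nonneg.2 hγ.2) (δp_nonneg hδ 1 x a y))

theorem δp_ne_zero_of_informativeKernel_ne_zero {γ : ℝ} {x : S ⊕ Fin 2} {a : A ⊕ Fin 2}
    {y : S ⊕ Fin 2} (h : informativeKernel δ γ x a y ≠ 0) :
    δp δ 0 x a y ≠ 0 ∨ δp δ 1 x a y ≠ 0 := by
  contrapose! h
  simp [informativeKernel, h.1, h.2]

theorem informativeKernel_inl_pos_iff (hδ : ∀ i s a s', 0 ≤ δ i s a s') {γ : ℝ}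
    (hγ : γ ∈ Set.Icc (0 : ℝ) 1) (s s' : S) (a : A ⊕ Fin 2) :
    0 < informativeKernel δ γ (Sum.inl s) a (Sum.inl s') ↔
      0 < δp δ 0 (Sum.inl s) a (Sum.inl s') :=
  convex_comb_pos_iff hγ (δp_nonneg hδ 0 _ _ _) (δp_nonneg hδ 1 _ _ _) (δp_inl_pos_iff s s' a)

def uninformativePairs (δ : Fin 2 → S → A → S → ℝ) : Set ((S ⊕ Fin 2) × (A ⊕ Fin 2)) :=
  {p | p.1 ∉ Set.range Sum.inr ∧ δp δ 0 p.1 p.2 = δp δ 1 p.1 p.2}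

theorem informativeKernel_of_mem_uninformativePairs {γ : ℝ} {p : (S ⊕ Fin 2) × (A ⊕ Fin 2)}
    (hp : p ∈ uninformativePairs δ) : informativeKernel δ γ p.1 p.2 = δp δ 0 p.1 p.2 := by
  funext y
  simp only [informativeKernel, hp.2]
  ring

variable [DecidableEq A] {act : S → Finset A} {ra : S → A}

theorem disjoint_uninformativePairs_ISAp : Disjoint (uninformativePairs δ) (ISAp act δ ra) := by
  refine Set.disjoint_left.2 ?_
  rintro p ⟨hp, heq⟩ (⟨-, hne, -⟩ | ⟨j, rfl⟩)
  · exact hne heq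
  · exact hp ⟨j, rfl⟩

theorem mem_ISAp_of_mem_range_inr {x : S ⊕ Fin 2} {a : A ⊕ Fin 2} (ha : a ∈ actp act δ ra x)
    (hx : x ∈ Set.range Sum.inr) : (x, a) ∈ ISAp act δ ra := by
  obtain ⟨j, rfl⟩ := hx
  exact Or.inr ⟨j, by simpa [actp] using ha⟩

theorem mem_uninformativePairs_of_step (hδ : ∀ i s a s', 0 ≤ δ i s a s') {γ : ℝ}
    {x y : S ⊕ Fin 2} {a b : A ⊕ Fin 2} (ha : a ∈ actp act δ ra x)
    (hxy : informativeKernel δ γ x a y ≠ 0) (hb : b ∈ actp act δ ra y)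
    (hxa : (x, a) ∉ ISAp act δ ra) (hyb : (y, b) ∉ ISAp act δ ra) :
    (x, a) ∈ uninformativePairs δ := by
  refine ⟨fun hx => hxa (mem_ISAp_of_mem_range_inr ha hx), ?_⟩
  by_contra hne
  have hdisj : ∀ z, ¬(0 < δp δ 0 x a z ∧ 0 < δp δ 1 x a z) :=
    fun z hz => hxa (Or.inl ⟨ha, hne, z, hz⟩)
  refine hyb (mem_ISAp_of_mem_range_inr hb ?_)
  rcases x with s | j
  · rcases y with s' | j
    · rcases δp_ne_zero_of_informativeKernel_ne_zero hxy with h | h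
      · have h0 := (δp_nonneg hδ 0 _ _ _).lt_of_ne' h
        exact absurd ⟨h0, (δp_inl_pos_iff s s' a).1 h0⟩ (hdisj _)
      · have h1 := (δp_nonneg hδ 1 _ _ _).lt_of_ne' h
        exact absurd ⟨(δp_inl_pos_iff s s' a).2 h1, h1⟩ (hdisj _)
    · exact ⟨j, rfl⟩
  · exact absurd (mem_ISAp_of_mem_range_inr ha ⟨j, rfl⟩) hxa

end Preprocessed

section InformativeMeasures

variable {S A : Type} [Fintype S] [Fintype A] [DecidableEq S] [DecidableEq A]
  {act : S → Finset A} {δ : Fin 2 → S → A → S → ℝ} {ra : S → A}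
  {π : Policy (S ⊕ Fin 2) (A ⊕ Fin 2) (actp act δ ra)} {x₀ : S ⊕ Fin 2}

theorem IsInduced.measure_infOften_ISAp_eq_one_iff (hδ : ∀ i s a s', 0 ≤ δ i s a s') {γ : ℝ}
    {P : Measure (Traj (S ⊕ Fin 2) (A ⊕ Fin 2))}
    (hP : IsInduced x₀ (informativeKernel δ γ) π.p P) :
    P {ω | (InfOften ω ∩ ISAp act δ ra).Nonempty} = 1 ↔
      ∀ N, P (Traj.tailIn (uninformativePairs δ) N) = 0 :=
  hP.measure_infOften_inter_nonempty_eq_one_iff disjoint_uninformativePairs_ISAp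
    fun _ _ _ _ ha hxy hb hxa hyb => mem_uninformativePairs_of_step hδ ha hxy hb hxa hyb

theorem IsInduced.measure_tailIn_uninformativePairs_eq_zero (hδ : ∀ i s a s', 0 ≤ δ i s a s')
    {γ γ' : ℝ} (hγ : γ ∈ Set.Icc (0 : ℝ) 1) (hγ' : γ' ∈ Set.Icc (0 : ℝ) 1)
    {P P' : Measure (Traj (S ⊕ Fin 2) (A ⊕ Fin 2))}
    (hP : IsInduced x₀ (informativeKernel δ γ) π.p P)
    (hP' : IsInduced x₀ (informativeKernel δ γ') π.p P')
    (h : ∀ N, P (Traj.tailIn (uninformativePairs δ) N) = 0) (N : ℕ) :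
    P' (Traj.tailIn (uninformativePairs δ) N) = 0 := by
  obtain ⟨K, hK, hle⟩ := exists_le_mul_of_pos_imp_pos
    (u := fun q : S × (A ⊕ Fin 2) × S => informativeKernel δ γ' (Sum.inl q.1) q.2.1 (Sum.inl q.2.2))
    (v := fun q => informativeKernel δ γ (Sum.inl q.1) q.2.1 (Sum.inl q.2.2))
    (fun _ => informativeKernel_nonneg hδ hγ _ _ _)
    fun _ hq => (informativeKernel_inl_pos_iff hδ hγ _ _ _).2
      ((informativeKernel_inl_pos_iff hδ hγ' _ _ _).1 hq)
  have hB : ∀ x a y, x ∈ Set.range Sum.inr → informativeKernel δ γ' x a y ≠ 0 →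
      y ∈ Set.range Sum.inr := by
    rintro x a y ⟨j, rfl⟩ hxy
    rcases δp_ne_zero_of_informativeKernel_ne_zero hxy with h | h <;>
      exact ⟨j, (eq_of_δp_inr_ne_zero h).symm⟩
  have hG : ∀ p ∈ uninformativePairs δ, p.1 ∉ Set.range Sum.inr ∧
      informativeKernel δ γ' p.1 p.2 = informativeKernel δ γ p.1 p.2 := fun p hp =>
    ⟨hp.1, by rw [informativeKernel_of_mem_uninformativePairs hp,
      informativeKernel_of_mem_uninformativePairs hp]⟩
  have hef : ∀ x a y, x ∉ Set.range Sum.inr → y ∉ Set.range Sum.inr →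
      informativeKernel δ γ' x a y ≤ K * informativeKernel δ γ x a y := by
    rintro (s | j) a (s' | j') hx hy
    · exact hle (s, a, s')
    all_goals simp at hx hy
  refine le_antisymm ?_ zero_le
  calc P' (Traj.tailIn (uninformativePairs δ) N)
      ≤ ENNReal.ofReal (K ^ N) * P (Traj.tailIn (uninformativePairs δ) N) :=
        hP'.measure_tailIn_le hP (informativeKernel_nonneg hδ hγ') (informativeKernel_nonneg hδ hγ)
          π.nonneg hB hG hK hef N
    _ = 0 := by rw [h N, mul_zero]

theorem IsInduced.measure_infOften_ISAp_eq_one_iff_of_informativeKernel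
    (hδ : ∀ i s a s', 0 ≤ δ i s a s') {γ γ' : ℝ} (hγ : γ ∈ Set.Icc (0 : ℝ) 1)
    (hγ' : γ' ∈ Set.Icc (0 : ℝ) 1) {P P' : Measure (Traj (S ⊕ Fin 2) (A ⊕ Fin 2))}
    (hP : IsInduced x₀ (informativeKernel δ γ) π.p P)
    (hP' : IsInduced x₀ (informativeKernel δ γ') π.p P') :
    P {ω | (InfOften ω ∩ ISAp act δ ra).Nonempty} = 1 ↔
      P' {ω | (InfOften ω ∩ ISAp act δ ra).Nonempty} = 1 := by
  rw [hP.measure_infOften_ISAp_eq_one_iff hδ, hP'.measure_infOften_ISAp_eq_one_iff hδ]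
  exact ⟨hP.measure_tailIn_uninformativePairs_eq_zero hδ hγ hγ' hP',
    hP'.measure_tailIn_uninformativePairs_eq_zero hδ hγ' hγ hP⟩

end InformativeMeasures

theorem induced_measure_infOften_ISA_iff_general
    {S A : Type} [Fintype S] [Fintype A] [DecidableEq S] [DecidableEq A]
    (act : S → Finset A) (init : S)
    (δ : Fin 2 → S → A → S → ℝ)
    (hδ0 : ∀ i s a s', 0 ≤ δ i s a s')
    (ra : S → A)
    (γ : ℝ) (hγ0 : 0 < γ) (hγ1 : γ < 1)
    (π : Policy (S ⊕ Fin 2) (A ⊕ Fin 2) (actp act δ ra))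
    (PI P1 P2 : MeasureTheory.Measure (Traj (S ⊕ Fin 2) (A ⊕ Fin 2)))
    (hPI : IsInduced (Sum.inl init)
      (fun sp ap s'p => γ * δp δ 0 sp ap s'p + (1 - γ) * δp δ 1 sp ap s'p) π.p PI)
    (hP1 : IsInduced (Sum.inl init) (δp δ 0) π.p P1)
    (hP2 : IsInduced (Sum.inl init) (δp δ 1) π.p P2) :
    (PI {ω | (InfOften ω ∩ ISAp act δ ra).Nonempty} = 1 ↔
        P1 {ω | (InfOften ω ∩ ISAp act δ ra).Nonempty} = 1) ∧
    (PI {ω | (InfOften ω ∩ ISAp act δ ra).Nonempty} = 1 ↔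
        P2 {ω | (InfOften ω ∩ ISAp act δ ra).Nonempty} = 1) := by
  have hγ : γ ∈ Set.Icc (0 : ℝ) 1 := ⟨hγ0.le, hγ1.le⟩
  rw [← informativeKernel_one] at hP1
  rw [← informativeKernel_zero] at hP2
  exact ⟨hPI.measure_infOften_ISAp_eq_one_iff_of_informativeKernel hδ0 hγ
      ⟨zero_le_one, le_rfl⟩ hP1,
    hPI.measure_infOften_ISAp_eq_one_iff_of_informativeKernel hδ0 hγ ⟨le_rfl, zero_le_one⟩ hP2⟩

/-- **Infinitely often visited informative state-action pairs.**
Let `M` be a binary MMDP given by `(act, init, δ 0, δ 1)`, let `M^p` be its preprocessed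
MMDP (with chosen revealing actions `ra`), and let `M^I` be any of its informative MDPs
(with kernel `δ^I = γ·δ₁^p + (1−γ)·δ₂^p`, `γ ∈ (0,1)`).  Let
`H_D = {h : inf(h) ∩ ISA^p ≠ ∅}`.  Then for any policy `π` on the preprocessed MMDP and
the measures `P_I^π, P_1^π, P_2^π` on infinite histories induced from `s_init` by `π` and
the kernels `δ^I, δ₁^p, δ₂^p` respectively:
`P_I^π(H_D) = 1 ↔ P_1^π(H_D) = 1` and `P_I^π(H_D) = 1 ↔ P_2^π(H_D) = 1`. -/
theorem induced_measure_infOften_ISA_iff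
    {S A : Type} [Fintype S] [Fintype A] [DecidableEq S] [DecidableEq A]
    (act : S → Finset A) (hact : ∀ s, (act s).Nonempty) (init : S)
    (δ : Fin 2 → S → A → S → ℝ)
    (hδ0 : ∀ i s a s', 0 ≤ δ i s a s')
    (hδ1 : ∀ i s, ∀ a ∈ act s, ∑ s', δ i s a s' = 1)
    (ra : S → A)
    (hra : ∀ s, RevealingState act δ s → ra s ∈ act s ∧ RevealingPair δ s (ra s))
    (γ : ℝ) (hγ0 : 0 < γ) (hγ1 : γ < 1)
    (π : Policy (S ⊕ Fin 2) (A ⊕ Fin 2) (actp act δ ra))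
    (PI P1 P2 : MeasureTheory.Measure (Traj (S ⊕ Fin 2) (A ⊕ Fin 2)))
    (hPI : IsInduced (Sum.inl init)
      (fun sp ap s'p => γ * δp δ 0 sp ap s'p + (1 - γ) * δp δ 1 sp ap s'p) π.p PI)
    (hP1 : IsInduced (Sum.inl init) (δp δ 0) π.p P1)
    (hP2 : IsInduced (Sum.inl init) (δp δ 1) π.p P2) :
    (PI {ω | (InfOften ω ∩ ISAp act δ ra).Nonempty} = 1 ↔
        P1 {ω | (InfOften ω ∩ ISAp act δ ra).Nonempty} = 1) ∧
    (PI {ω | (InfOften ω ∩ ISAp act δ ra).Nonempty} = 1 ↔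
        P2 {ω | (InfOften ω ∩ ISAp act δ ra).Nonempty} = 1) :=
  induced_measure_infOften_ISA_iff_general act init δ hδ0 ra γ hγ0 hγ1 π PI P1 P2 hPI hP1 hP2
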